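/- Let G be a nilpotent group of class at most 5 and of exponent dividing 9, generated by two elements x, y. Then [x³, y, x³, y] = 1. -/

import Mathlib

/-- Commutator `[a,b] = a⁻¹b⁻¹ab`. -/
def gcomm {G : Type*} [Group G] (a b : G) : G := a⁻¹ * b⁻¹ * a * b

/-- Left-normed iterated commutator `[x, ₙ y]`. -/
def engelComm {G : Type*} [Group G] (x y : G) : ℕ → G
  | 0 => x
  | n + 1 => gcomm (engelComm x y n) y

/-- A group is locally nilpotent if every finitely generated subgroup is nilpotent. -/
def IsLocallyNilpotent (G : Type*) [Group G] : Prop :=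
  ∀ H : Subgroup G, H.FG → Group.IsNilpotent H

/-- The Hirsch–Plotkin radical: the subgroup generated by all normal locally
nilpotent subgroups of `G`. -/
def HirschPlotkinRadical (G : Type*) [Group G] : Subgroup G :=
  Subgroup.closure (⋃ H ∈ {H : Subgroup G | H.Normal ∧ IsLocallyNilpotent H}, (H : Set G))

section AuxLemmas

variable {G : Type*} [Group G]

open scoped commutatorElement

theorem lcs_comm_le : ∀ (n m : ℕ),
    ⁅(⊤ : Subgroup G).lowerCentralSeries m, (⊤ : Subgroup G).lowerCentralSeries n⁆ ≤ (⊤ : Subgroup G).lowerCentralSeries (m + n + 1) := by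
  intro n
  induction n with
  | zero =>
    intro m
    rw [Nat.add_zero]
    exact le_of_eq rfl
  | succ n ih =>
    intro m
    rw [show m + (n + 1) + 1 = m + n + 2 from by omega]
    have hnorm : ((⊤ : Subgroup G).lowerCentralSeries (m + n + 2)).Normal := Subgroup.lowerCentralSeries_normal _ _
    set π := QuotientGroup.mk' ((⊤ : Subgroup G).lowerCentralSeries (m + n + 2)) with hπ
    have hsurj : Function.Surjective π := QuotientGroup.mk'_surjective _
    have hker : π.ker = (⊤ : Subgroup G).lowerCentralSeries (m + n + 2) := QuotientGroup.ker_mk' _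
    rw [← hker, ← Subgroup.map_eq_bot_iff, Subgroup.map_commutator]
    have hmapsucc : ∀ k : ℕ, Subgroup.map π ((⊤ : Subgroup G).lowerCentralSeries (k + 1)) =
        ⁅Subgroup.map π ((⊤ : Subgroup G).lowerCentralSeries k), ⊤⁆ := by
      intro k
      rw [show (⊤ : Subgroup G).lowerCentralSeries (k + 1) = ⁅(⊤ : Subgroup G).lowerCentralSeries k, ⊤⁆ from rfl,
        Subgroup.map_commutator, Subgroup.map_top_of_surjective _ hsurj]
    rw [Subgroup.commutator_comm, hmapsucc n]
    apply Subgroup.commutator_commutator_eq_bot_of_rotate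
    · -- ⁅⁅⊤, π Lm⁆, π Ln⁆ = ⊥
      rw [Subgroup.commutator_comm (⊤ : Subgroup (G ⧸ _)), ← hmapsucc m,
        ← Subgroup.map_commutator, Subgroup.map_eq_bot_iff, hker]
      refine le_trans (ih (m + 1)) (le_of_eq ?_)
      congr 1
      omega
    · -- ⁅⁅π Lm, π Ln⁆, ⊤⁆ = ⊥
      rw [← Subgroup.map_top_of_surjective π hsurj, ← Subgroup.map_commutator,
        ← Subgroup.map_commutator, Subgroup.map_eq_bot_iff, hker]
      exact Subgroup.commutator_mono (ih m) le_rfl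

theorem gcomm_eq_commutatorElement (a b : G) : gcomm a b = ⁅a⁻¹, b⁻¹⁆ := by
  simp [gcomm, commutatorElement_def, mul_assoc]

theorem gcomm_eq_one_iff (a b : G) : gcomm a b = 1 ↔ Commute a b := by
  rw [gcomm_eq_commutatorElement, commutatorElement_eq_one_iff_mul_comm, ← mul_inv_rev,
    ← mul_inv_rev, inv_inj, commute_iff_eq]
  exact eq_comm

theorem gcomm_eq_one_of_commute {a b : G} (h : Commute a b) : gcomm a b = 1 :=
  (gcomm_eq_one_iff a b).mpr h

theorem gcomm_one_left (a : G) : gcomm 1 a = 1 := by simp [gcomm]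

theorem gcomm_mem {m n : ℕ} {a b : G} (ha : a ∈ (⊤ : Subgroup G).lowerCentralSeries m)
    (hb : b ∈ (⊤ : Subgroup G).lowerCentralSeries n) : gcomm a b ∈ (⊤ : Subgroup G).lowerCentralSeries (m + n + 1) := by
  rw [gcomm_eq_commutatorElement]
  exact lcs_comm_le n m (Subgroup.commutator_mem_commutator (inv_mem ha) (inv_mem hb))

theorem pow_three_eq (g : G) : g ^ 3 = g * g * g := by
  rw [pow_succ, pow_succ, pow_one]

theorem gcomm_mem' {m n k : ℕ} {a b : G} (hk : m + n + 1 = k)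
    (ha : a ∈ (⊤ : Subgroup G).lowerCentralSeries m) (hb : b ∈ (⊤ : Subgroup G).lowerCentralSeries n) :
    gcomm a b ∈ (⊤ : Subgroup G).lowerCentralSeries k := hk ▸ gcomm_mem ha hb

theorem gcomm_mul_left (A B t : G) :
    gcomm (A * B) t = gcomm A t * gcomm (gcomm A t) B * gcomm B t := by
  simp only [gcomm]; group

theorem gcomm_mul_central (A w t : G) (hw : ∀ g : G, Commute w g) :
    gcomm (A * w) t = gcomm A t := by
  simp only [gcomm, mul_inv_rev, mul_assoc]
  rw [(hw t).eq, ((hw (A⁻¹ * (t⁻¹ * (A * (t * w))))).inv_left).eq]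
  group

theorem gcomm_cube_left (a b : G) :
    gcomm (a ^ 3) b = gcomm a b * (gcomm (gcomm a b) a * (gcomm (gcomm a b) a *
      (gcomm (gcomm (gcomm a b) a) a * (gcomm a b * (gcomm (gcomm a b) a * gcomm a b))))) := by
  simp only [gcomm, pow_three_eq]; group

theorem gcomm_cube_right (u a : G) :
    gcomm u (a ^ 3) = gcomm u a * (gcomm u a * (gcomm (gcomm u a) a * (gcomm u a *
      (gcomm (gcomm u a) a * (gcomm (gcomm u a) a * gcomm (gcomm (gcomm u a) a) a))))) := by
  simp only [gcomm, pow_three_eq]; group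

theorem gcomm_cube_left_of_triv {a b : G} (h : gcomm (gcomm a b) a = 1) :
    gcomm (a ^ 3) b = (gcomm a b) ^ 3 := by
  rw [gcomm_cube_left, h, gcomm_one_left, pow_three_eq]
  group

theorem mswap {x y : G} (h : Commute y x) (t : G) : y * (x * t) = x * (y * t) := by
  rw [← mul_assoc, h.eq, mul_assoc]

end AuxLemmas

set_option maxHeartbeats 2000000 in
theorem comm_pow_three_eq_one_of_class_five_exponent_nine
    {G : Type*} [Group G] (x y : G)
    (hgen : Subgroup.closure ({x, y} : Set G) = ⊤)
    (hclass : (⊤ : Subgroup G).lowerCentralSeries 5 = ⊥)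
    (hexp : ∀ g : G, g ^ 9 = 1) :
    gcomm (gcomm (gcomm (x ^ 3) y) (x ^ 3)) y = 1 := by
  -- basic tools
  have mem0 : ∀ g : G, g ∈ (⊤ : Subgroup G).lowerCentralSeries 0 := fun g => Subgroup.mem_top g
  have triv : ∀ {m n : ℕ} {a b : G}, a ∈ (⊤ : Subgroup G).lowerCentralSeries m →
      b ∈ (⊤ : Subgroup G).lowerCentralSeries n → 4 ≤ m + n → gcomm a b = 1 := by
    intro m n a b ha hb hmn
    have h := gcomm_mem ha hb
    have hle : (⊤ : Subgroup G).lowerCentralSeries (m + n + 1) ≤ ⊥ :=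
      hclass ▸ Subgroup.lowerCentralSeries_antitone _ (show 5 ≤ m + n + 1 by omega)
    simpa [Subgroup.mem_bot] using hle h
  have hcomm : ∀ {m n : ℕ} {a b : G}, a ∈ (⊤ : Subgroup G).lowerCentralSeries m →
      b ∈ (⊤ : Subgroup G).lowerCentralSeries n → 4 ≤ m + n → Commute a b :=
    fun ha hb h4 => (gcomm_eq_one_iff _ _).mp (triv ha hb h4)
  have central : ∀ {a : G}, a ∈ (⊤ : Subgroup G).lowerCentralSeries 4 → ∀ g : G, Commute a g :=
    fun ha g => hcomm ha (mem0 g) (by omega)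
  -- the basic commutators
  set c := gcomm x y with hc_def
  set d := gcomm c x with hd_def
  set e := gcomm d x with he_def
  set f := gcomm e x with hf_def
  set z := gcomm d c with hz_def
  set u := gcomm (x ^ 3) y with hu_def
  set p := gcomm u x with hp_def
  set q := gcomm p x with hq_def
  set r := gcomm q x with hr_def
  -- memberships
  have memc : c ∈ (⊤ : Subgroup G).lowerCentralSeries 1 := gcomm_mem' (by norm_num) (mem0 x) (mem0 y)
  have memd : d ∈ (⊤ : Subgroup G).lowerCentralSeries 2 := gcomm_mem' (by norm_num) memc (mem0 x)
  have meme : e ∈ (⊤ : Subgroup G).lowerCentralSeries 3 := gcomm_mem' (by norm_num) memd (mem0 x)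
  have memf : f ∈ (⊤ : Subgroup G).lowerCentralSeries 4 := gcomm_mem' (by norm_num) meme (mem0 x)
  have memz : z ∈ (⊤ : Subgroup G).lowerCentralSeries 4 := gcomm_mem' (by norm_num) memd memc
  have memu : u ∈ (⊤ : Subgroup G).lowerCentralSeries 1 := gcomm_mem' (by norm_num) (mem0 (x ^ 3)) (mem0 y)
  have memp : p ∈ (⊤ : Subgroup G).lowerCentralSeries 2 := gcomm_mem' (by norm_num) memu (mem0 x)
  have memq : q ∈ (⊤ : Subgroup G).lowerCentralSeries 3 := gcomm_mem' (by norm_num) memp (mem0 x)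
  have memr : r ∈ (⊤ : Subgroup G).lowerCentralSeries 4 := gcomm_mem' (by norm_num) memq (mem0 x)
  -- commuting facts
  have hzc : ∀ g : G, Commute z g := central memz
  have hfc : ∀ g : G, Commute f g := central memf
  have hrc : ∀ g : G, Commute r g := central memr
  have hec : Commute e c := hcomm meme memc (by omega)
  have hed : Commute e d := hcomm meme memd (by omega)
  have hde : Commute d e := hed.symm
  have hqp : Commute q p := hcomm memq memp (by omega)
  -- the z-relation
  have hzrel : ∀ t : G, d * (c * t) = c * (d * (z * t)) := by
    intro t; rw [hz_def]; simp only [gcomm]; group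
  have hzrel' : d * c = c * (d * z) := by
    rw [hz_def]; simp only [gcomm]; group
  -- Step I : collect u
  have hu : u = c ^ 3 * (d ^ 3 * e) * z ^ 5 := by
    rw [hu_def, gcomm_cube_left x y, ← hc_def, ← hd_def, ← he_def]
    simp only [hzrel, hzrel', mswap hec, hec.eq, mswap hed, hed.eq,
      mswap (hzc c), (hzc c).eq, mswap (hzc d), (hzc d).eq, mswap (hzc e), (hzc e).eq]
    simp only [pow_three_eq, show ∀ g : G, g ^ 5 = g * g * g * g * g from fun g => by
      rw [pow_succ, pow_succ, pow_three_eq]]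
    group
  -- Step II : v = p³ q³ r
  have hv : gcomm u (x ^ 3) = p ^ 3 * (q ^ 3 * r) := by
    rw [gcomm_cube_right u x, ← hp_def, ← hq_def, ← hr_def]
    simp only [mswap hqp, hqp.eq, mswap (hrc p), (hrc p).eq, mswap (hrc q), (hrc q).eq]
    simp only [pow_three_eq]
    group
  -- cube computations
  have hc3x : gcomm (c ^ 3) x = d ^ 3 * z ^ 3 := by
    rw [gcomm_cube_left c x, ← hd_def, ← hz_def, gcomm_eq_one_of_commute (hzc c)]
    simp only [one_mul, mswap (hzc d), (hzc d).eq]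
    simp only [pow_three_eq]
    group
  have hd3x : gcomm (d ^ 3) x = e ^ 3 := by
    have h1 : gcomm (gcomm d x) d = 1 := by
      rw [← he_def]; exact triv meme memd (by omega)
    rw [gcomm_cube_left_of_triv h1, ← he_def]
  have he3x : gcomm (e ^ 3) x = f ^ 3 := by
    have h1 : gcomm (gcomm e x) e = 1 := by
      rw [← hf_def]; exact gcomm_eq_one_of_commute (hfc e)
    rw [gcomm_cube_left_of_triv h1, ← hf_def]
  -- Step III : compute p
  have hzpow5 : ∀ g : G, Commute (z ^ 5) g := fun g => (hzc g).pow_left 5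
  have hp_val : p = d ^ 3 * z ^ 3 * (e ^ 3 * f) := by
    rw [hp_def, hu, gcomm_mul_central _ _ _ hzpow5, gcomm_mul_left, hc3x]
    have hmid : gcomm (d ^ 3 * z ^ 3) (d ^ 3 * e) = 1 := by
      refine gcomm_eq_one_of_commute ?_
      have h1 : Commute d (d ^ 3 * e) := ((Commute.refl d).pow_right 3).mul_right hde
      exact (h1.pow_left 3).mul_left ((hzc (d ^ 3 * e)).pow_left 3)
    rw [hmid, gcomm_mul_left, hd3x, ← hf_def]
    have hmid2 : gcomm (e ^ 3) e = 1 :=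
      gcomm_eq_one_of_commute ((Commute.refl e).pow_left 3)
    rw [hmid2]
    group
  have hp2 : p = d ^ 3 * e ^ 3 * (z ^ 3 * f) := by
    rw [hp_val]
    have hze : Commute (z ^ 3) (e ^ 3) := ((hzc e).pow_left 3).pow_right 3
    calc d ^ 3 * z ^ 3 * (e ^ 3 * f) = d ^ 3 * (z ^ 3 * e ^ 3) * f := by group
      _ = d ^ 3 * (e ^ 3 * z ^ 3) * f := by rw [hze.eq]
      _ = d ^ 3 * e ^ 3 * (z ^ 3 * f) := by group
  have hwzf : ∀ g : G, Commute (z ^ 3 * f) g :=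
    fun g => ((hzc g).pow_left 3).mul_left (hfc g)
  -- cube lemmas with y
  have hd3y : gcomm (d ^ 3) y = (gcomm d y) ^ 3 :=
    gcomm_cube_left_of_triv (triv (gcomm_mem' (k := 3) (by norm_num) memd (mem0 y)) memd (by omega))
  have he3y : gcomm (e ^ 3) y = (gcomm e y) ^ 3 :=
    gcomm_cube_left_of_triv (triv (gcomm_mem' (k := 4) (by norm_num) meme (mem0 y)) meme (by omega))
  -- gcomm p y
  have hpy : gcomm p y = (gcomm d y) ^ 3 * (gcomm e y) ^ 3 := by
    rw [hp2, gcomm_mul_central _ _ _ hwzf, gcomm_mul_left, hd3y, he3y]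
    have hmid : gcomm ((gcomm d y) ^ 3) (e ^ 3) = 1 :=
      triv (pow_mem (gcomm_mem' (k := 3) (by norm_num) memd (mem0 y)) 3) (pow_mem meme 3) (by omega)
    rw [hmid]
    group
  have hpy3 : (gcomm p y) ^ 3 = 1 := by
    rw [hpy]
    have hcde : Commute ((gcomm d y) ^ 3) ((gcomm e y) ^ 3) :=
      (hcomm (gcomm_mem' (k := 3) (by norm_num) memd (mem0 y)) (gcomm_mem' (k := 4) (by norm_num) meme (mem0 y)) (by omega)).pow_pow 3 3
    rw [hcde.mul_pow, ← pow_mul, ← pow_mul]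
    norm_num
    rw [hexp, hexp, one_mul]
  -- q
  have hq_val : q = e ^ 3 * f ^ 3 := by
    rw [hq_def, hp2, gcomm_mul_central _ _ _ hwzf, gcomm_mul_left, hd3x, he3x]
    have hmid : gcomm (e ^ 3) (e ^ 3) = 1 :=
      gcomm_eq_one_of_commute (Commute.refl (e ^ 3))
    rw [hmid]
    group
  have hfpow3 : ∀ g : G, Commute (f ^ 3) g := fun g => (hfc g).pow_left 3
  have hqy : gcomm q y = (gcomm e y) ^ 3 := by
    rw [hq_val, gcomm_mul_central _ _ _ hfpow3, he3y]
  have hqy3 : (gcomm q y) ^ 3 = 1 := by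
    rw [hqy, ← pow_mul]
    norm_num
    exact hexp _
  -- assemble
  have hA : gcomm (p ^ 3) y = (gcomm p y) ^ 3 :=
    gcomm_cube_left_of_triv (triv (gcomm_mem' (k := 3) (by norm_num) memp (mem0 y)) memp (by omega))
  have hq3y : gcomm (q ^ 3) y = (gcomm q y) ^ 3 :=
    gcomm_cube_left_of_triv (triv (gcomm_mem' (k := 4) (by norm_num) memq (mem0 y)) memq (by omega))
  have hB : gcomm (q ^ 3 * r) y = (gcomm q y) ^ 3 := by
    rw [gcomm_mul_left, hq3y]
    have h2 : gcomm ((gcomm q y) ^ 3) r = 1 :=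
      triv (pow_mem (gcomm_mem' (k := 4) (by norm_num) memq (mem0 y)) 3) memr (by omega)
    have h3 : gcomm r y = 1 := triv memr (mem0 y) (by omega)
    rw [h2, h3]
    group
  rw [hv, gcomm_mul_left, hA, hB]
  have hmid : gcomm ((gcomm p y) ^ 3) (q ^ 3 * r) = 1 := by
    refine triv (m := 3) (n := 3) (pow_mem (gcomm_mem' (k := 3) (by norm_num) memp (mem0 y)) 3)
      (mul_mem (pow_mem memq 3) (Subgroup.lowerCentralSeries_antitone _ (show 3 ≤ 4 by omega) memr))
      (by omega)
  rw [hmid, hpy3, hqy3]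
  group
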